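/- arXiv:1501.04744 — 7 statements merged into one kernel-verified Lean document; each statement's English description precedes it below -/
import Mathlib

section
/- Let b be a positive integer. In the quotient ring ℤ[i]/(b+bi) of the Gaussian integers by the principal ideal generated by b+bi, the additive order of the residue class of 1 is 2b, the additive order of the residue class of i is 2b, and the additive order of the residue class of 1+i is b. -/
open Zsqrtd Ideal.Quotient

private lemma alpha_eq (b : ℕ) :
    (b : GaussianInt) + (b : GaussianInt) * Zsqrtd.sqrtd = ⟨(b:ℤ), (b:ℤ)⟩ := by
  ext <;> simp

private lemma dvd_one_case (b n : ℕ) (hb : 0 < b) :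
    ((⟨(b:ℤ),(b:ℤ)⟩ : GaussianInt) ∣ (⟨(n:ℤ), 0⟩ : GaussianInt)) ↔ 2*b ∣ n := by
  have hbz : (0:ℤ) < b := by exact_mod_cast hb
  constructor
  · rintro ⟨c, hc⟩
    rw [Zsqrtd.ext_iff] at hc
    simp [Zsqrtd.re_mul, Zsqrtd.im_mul] at hc
    obtain ⟨h1, h2⟩ := hc
    have hre : c.re = -c.im := by nlinarith
    have : ((2*b : ℕ) : ℤ) ∣ (n:ℤ) := ⟨-c.im, by push_cast; rw [h1, hre]; ring⟩
    exact_mod_cast this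
  · rintro ⟨k, rfl⟩
    exact ⟨⟨(k:ℤ), -(k:ℤ)⟩, by ext <;> simp [Zsqrtd.re_mul, Zsqrtd.im_mul] <;> push_cast <;> ring⟩

private lemma dvd_i_case (b n : ℕ) (hb : 0 < b) :
    ((⟨(b:ℤ),(b:ℤ)⟩ : GaussianInt) ∣ (⟨0, (n:ℤ)⟩ : GaussianInt)) ↔ 2*b ∣ n := by
  have hbz : (0:ℤ) < b := by exact_mod_cast hb
  constructor
  · rintro ⟨c, hc⟩
    rw [Zsqrtd.ext_iff] at hc
    simp [Zsqrtd.re_mul, Zsqrtd.im_mul] at hc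
    obtain ⟨h1, h2⟩ := hc
    have hre : c.re = c.im := by nlinarith
    have : ((2*b : ℕ) : ℤ) ∣ (n:ℤ) := ⟨c.im, by push_cast; rw [h2, hre]; ring⟩
    exact_mod_cast this
  · rintro ⟨k, rfl⟩
    exact ⟨⟨(k:ℤ), (k:ℤ)⟩, by ext <;> simp [Zsqrtd.re_mul, Zsqrtd.im_mul] <;> push_cast <;> ring⟩

private lemma dvd_both_case (b n : ℕ) (hb : 0 < b) :
    ((⟨(b:ℤ),(b:ℤ)⟩ : GaussianInt) ∣ (⟨(n:ℤ), (n:ℤ)⟩ : GaussianInt)) ↔ b ∣ n := by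
  have hbz : (0:ℤ) < b := by exact_mod_cast hb
  constructor
  · rintro ⟨c, hc⟩
    rw [Zsqrtd.ext_iff] at hc
    simp [Zsqrtd.re_mul, Zsqrtd.im_mul] at hc
    obtain ⟨h1, h2⟩ := hc
    have him : c.im = 0 := by nlinarith
    have : ((b : ℕ) : ℤ) ∣ (n:ℤ) := ⟨c.re, by rw [h1, him]; ring⟩
    exact_mod_cast this
  · rintro ⟨k, rfl⟩
    exact ⟨⟨(k:ℤ), 0⟩, by ext <;> simp [Zsqrtd.re_mul, Zsqrtd.im_mul] <;> push_cast <;> ring⟩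

private lemma order_of_mk (b : ℕ) (x : GaussianInt) (d : ℕ) (hd : 0 < d)
    (h : ∀ n : ℕ, ((⟨(b:ℤ),(b:ℤ)⟩ : GaussianInt) ∣ (n : GaussianInt) * x) ↔ d ∣ n) :
    addOrderOf (Ideal.Quotient.mk
      (Ideal.span {(b : GaussianInt) + (b : GaussianInt) * Zsqrtd.sqrtd}) x) = d := by
  rw [alpha_eq]
  have key : ∀ n : ℕ, n • (Ideal.Quotient.mk
      (Ideal.span {(⟨(b:ℤ),(b:ℤ)⟩ : GaussianInt)}) x) = 0 ↔ d ∣ n := by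
    intro n
    rw [nsmul_eq_mul, ← map_natCast (Ideal.Quotient.mk (Ideal.span {(⟨(b:ℤ),(b:ℤ)⟩ : GaussianInt)})),
      ← map_mul, Ideal.Quotient.eq_zero_iff_mem, Ideal.mem_span_singleton]
    exact h n
  rw [addOrderOf_eq_iff hd]
  constructor
  · exact (key d).mpr dvd_rfl
  · intro m hm hm0 hcon
    have := (key m).mp hcon
    exact absurd (Nat.le_of_dvd hm0 this) (not_le.mpr hm)

theorem stmt_1 (b : ℕ) (hb : 0 < b) :
    addOrderOf (Ideal.Quotient.mk
      (Ideal.span {(b : GaussianInt) + (b : GaussianInt) * Zsqrtd.sqrtd}) 1) = 2 * b ∧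
    addOrderOf (Ideal.Quotient.mk
      (Ideal.span {(b : GaussianInt) + (b : GaussianInt) * Zsqrtd.sqrtd}) Zsqrtd.sqrtd) = 2 * b ∧
    addOrderOf (Ideal.Quotient.mk
      (Ideal.span {(b : GaussianInt) + (b : GaussianInt) * Zsqrtd.sqrtd}) (1 + Zsqrtd.sqrtd)) = b := by
  refine ⟨?_, ?_, ?_⟩
  · refine order_of_mk b 1 (2*b) (by omega) (fun n => ?_)
    have : (n : GaussianInt) * 1 = ⟨(n:ℤ), 0⟩ := by ext <;> simp
    rw [this]; exact dvd_one_case b n hb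
  · refine order_of_mk b Zsqrtd.sqrtd (2*b) (by omega) (fun n => ?_)
    have : (n : GaussianInt) * Zsqrtd.sqrtd = ⟨0, (n:ℤ)⟩ := by ext <;> simp
    rw [this]; exact dvd_i_case b n hb
  · refine order_of_mk b (1 + Zsqrtd.sqrtd) b hb (fun n => ?_)
    have : (n : GaussianInt) * (1 + Zsqrtd.sqrtd) = ⟨(n:ℤ), (n:ℤ)⟩ := by
      ext <;> simp [Zsqrtd.re_mul, Zsqrtd.im_mul]
    rw [this]; exact dvd_both_case b n hb
end

section
/- Let g > 1 be an integer and let G be the group with presentation ⟨A, B, C | A² = B^{2g+2} = C⁴ = ABC = (C⁻¹B)² = 1⟩. Then in G the element C²A equals CB⁻¹, and this element has order 2. -/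
/-- Relators of the Accola–Maclachlan group
⟨A, B, C | A² = B^{2g+2} = C⁴ = ABC = (C⁻¹B)² = 1⟩, with generators
A, B, C represented by `FreeGroup.of 0`, `FreeGroup.of 1`, `FreeGroup.of 2`. -/
def amRels (g : ℕ) : Set (FreeGroup (Fin 3)) :=
  {FreeGroup.of 0 ^ 2, FreeGroup.of 1 ^ (2 * g + 2), FreeGroup.of 2 ^ 4,
   FreeGroup.of 0 * FreeGroup.of 1 * FreeGroup.of 2,
   ((FreeGroup.of 2)⁻¹ * FreeGroup.of 1) ^ 2}

/-! From `ABC = 1` we get `CA = B⁻¹`, hence `C²A = CB⁻¹`. Conjugating by `C` turns `CB⁻¹` into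
`(C⁻¹B)⁻¹`, so it squares to `1`; it is not `1` because the homomorphism to `ℤ/2` sending
`A, B ↦ 1` and `C ↦ 0` kills every relator but not `CB⁻¹`. -/

section GroupIdentities

variable {G : Type*} [Group G] {a b c : G}

theorem mul_eq_inv_of_mul_mul_eq_one (habc : a * b * c = 1) : c * a = b⁻¹ := by
  have hc : c = b⁻¹ * a⁻¹ := by
    rw [eq_inv_of_mul_eq_one_right habc, mul_inv_rev]
  rw [hc, inv_mul_cancel_right]

theorem sq_mul_eq_mul_inv_of_mul_mul_eq_one (habc : a * b * c = 1) :
    c ^ 2 * a = c * b⁻¹ := by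
  rw [pow_two, mul_assoc, mul_eq_inv_of_mul_mul_eq_one habc]

theorem mul_inv_sq_eq_one_of_inv_mul_sq_eq_one (h : (c⁻¹ * b) ^ 2 = 1) :
    (c * b⁻¹) ^ 2 = 1 := by
  have hconj : c * b⁻¹ = c * (c⁻¹ * b)⁻¹ * c⁻¹ := by group
  rw [hconj, conj_pow, inv_pow, h, inv_one, mul_one, mul_inv_cancel]

end GroupIdentities

namespace AccolaMaclachlan

variable (g : ℕ)

local notation "A" => (PresentedGroup.of 0 : PresentedGroup (amRels g))
local notation "B" => (PresentedGroup.of 1 : PresentedGroup (amRels g))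
local notation "C" => (PresentedGroup.of 2 : PresentedGroup (amRels g))

theorem of_zero_mul_of_one_mul_of_two : A * B * C = 1 := by
  simp only [PresentedGroup.of, ← map_mul]
  exact PresentedGroup.one_of_mem (by simp [amRels])

theorem inv_of_two_mul_of_one_sq : (C⁻¹ * B) ^ 2 = 1 := by
  simp only [PresentedGroup.of, ← map_pow, ← map_mul, ← map_inv]
  exact PresentedGroup.one_of_mem (by simp [amRels])

def parity : PresentedGroup (amRels g) →* Multiplicative (ZMod 2) :=
  PresentedGroup.toGroup (f := fun i => if i = 2 then 1 else Multiplicative.ofAdd 1) <| by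
    have h2 : Multiplicative.ofAdd (1 : ZMod 2) ^ 2 = 1 := by decide
    rintro r (rfl | rfl | rfl | rfl | rfl) <;> simp [h2]
    · rw [show 2 * g + 2 = 2 * (g + 1) by ring, pow_mul, h2, one_pow]
    · rw [← sq, h2]

theorem of_two_mul_inv_of_one_ne_one : C * B⁻¹ ≠ 1 := fun h => by
  simpa [parity, PresentedGroup.toGroup.of] using congrArg (parity g) h

end AccolaMaclachlan

theorem stmt_6_general (g : ℕ)
    (A B C : PresentedGroup (amRels g))
    (hA : A = PresentedGroup.of 0) (hB : B = PresentedGroup.of 1)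
    (hC : C = PresentedGroup.of 2) :
    C ^ 2 * A = C * B⁻¹ ∧ orderOf (C ^ 2 * A) = 2 := by
  subst hA hB hC
  have hid := sq_mul_eq_mul_inv_of_mul_mul_eq_one
    (AccolaMaclachlan.of_zero_mul_of_one_mul_of_two g)
  refine ⟨hid, ?_⟩
  rw [hid]
  exact orderOf_eq_prime
    (mul_inv_sq_eq_one_of_inv_mul_sq_eq_one (AccolaMaclachlan.inv_of_two_mul_of_one_sq g))
    (AccolaMaclachlan.of_two_mul_inv_of_one_ne_one g)

theorem stmt_6 (g : ℕ) (hg : 1 < g)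
    (A B C : PresentedGroup (amRels g))
    (hA : A = PresentedGroup.of 0) (hB : B = PresentedGroup.of 1)
    (hC : C = PresentedGroup.of 2) :
    C ^ 2 * A = C * B⁻¹ ∧ orderOf (C ^ 2 * A) = 2 :=
  stmt_6_general g A B C hA hB hC
end

section
/- Let g > 1 be an integer and let G be the group with presentation ⟨A, B, C | A² = B^{2g+2} = C⁴ = ABC = (C⁻¹B)² = 1⟩. Then the element B^{g+1}C² of G has order 2. -/
/-- Auxiliary map to `DihedralGroup 4` killing the relators. -/
def amF : Fin 3 → DihedralGroup 4
  | 0 => DihedralGroup.sr 1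
  | 1 => DihedralGroup.sr 0
  | 2 => DihedralGroup.r 1

open DihedralGroup

theorem stmt_7 (g : ℕ) (hg : 1 < g)
    (B C : PresentedGroup (amRels g))
    (hB : B = PresentedGroup.of 1) (hC : C = PresentedGroup.of 2) :
    orderOf (B ^ (g + 1) * C ^ 2) = 2 := by
  subst hB hC
  set Bv : PresentedGroup (amRels g) := PresentedGroup.of 1 with hBv
  set Cv : PresentedGroup (amRels g) := PresentedGroup.of 2 with hCv
  set Av : PresentedGroup (amRels g) := PresentedGroup.of 0 with hAv
  set π : FreeGroup (Fin 3) →* PresentedGroup (amRels g) :=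
    QuotientGroup.mk' (Subgroup.normalClosure (amRels g)) with hπ
  have key : ∀ r ∈ amRels g, π r = 1 := by
    intro r hr
    exact (QuotientGroup.eq_one_iff r).2 (Subgroup.subset_normalClosure hr)
  have hπ0 : π (FreeGroup.of 0) = Av := rfl
  have hπ1 : π (FreeGroup.of 1) = Bv := rfl
  have hπ2 : π (FreeGroup.of 2) = Cv := rfl
  have hA2 : Av ^ 2 = 1 := by
    have h := key _ (show (FreeGroup.of 0 ^ 2 : FreeGroup (Fin 3)) ∈ amRels g by
      simp [amRels])
    rwa [map_pow, hπ0] at h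
  have hB2 : Bv ^ (2 * g + 2) = 1 := by
    have h := key _ (show (FreeGroup.of 1 ^ (2 * g + 2) : FreeGroup (Fin 3)) ∈ amRels g by
      simp [amRels])
    rwa [map_pow, hπ1] at h
  have hC4 : Cv ^ 4 = 1 := by
    have h := key _ (show (FreeGroup.of 2 ^ 4 : FreeGroup (Fin 3)) ∈ amRels g by
      simp [amRels])
    rwa [map_pow, hπ2] at h
  have hABC : Av * Bv * Cv = 1 := by
    have h := key _ (show (FreeGroup.of 0 * FreeGroup.of 1 * FreeGroup.of 2 :
        FreeGroup (Fin 3)) ∈ amRels g by simp [amRels])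
    rwa [map_mul, map_mul, hπ0, hπ1, hπ2] at h
  have hCB : (Cv⁻¹ * Bv) ^ 2 = 1 := by
    have h := key _ (show ((FreeGroup.of 2)⁻¹ * FreeGroup.of 1 : FreeGroup (Fin 3)) ^ 2 ∈
        amRels g by simp [amRels])
    rwa [map_pow, map_mul, map_inv, hπ1, hπ2] at h
  -- A = (B*C)⁻¹, so (B*C)² = 1
  have hAeq : Av = (Bv * Cv)⁻¹ := by
    rw [mul_assoc] at hABC
    exact eq_inv_of_mul_eq_one_left hABC
  have hBC2 : (Bv * Cv) ^ 2 = 1 := by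
    have h : ((Bv * Cv)⁻¹) ^ 2 = 1 := by rw [← hAeq]; exact hA2
    rwa [inv_pow, inv_eq_one] at h
  -- C*(B*C) = B⁻¹
  have h5 : Cv * (Bv * Cv) = Bv⁻¹ := by
    rw [pow_two, mul_assoc] at hBC2
    exact eq_inv_of_mul_eq_one_right hBC2
  -- B*C⁻¹ = C*B⁻¹
  have h6 : Bv * Cv⁻¹ = Cv * Bv⁻¹ := by
    rw [pow_two] at hCB
    have h : Bv * (Cv⁻¹ * Bv) = Cv := by
      have := congrArg (fun z => Cv * z) hCB
      simpa [mul_assoc] using this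
    calc Bv * Cv⁻¹ = (Bv * (Cv⁻¹ * Bv)) * Bv⁻¹ := by group
      _ = Cv * Bv⁻¹ := by rw [h]
  -- C² = C⁻²
  have hC2inv : Cv ^ 2 = (Cv ^ 2)⁻¹ := by
    have h : Cv ^ 2 * Cv ^ 2 = 1 := by rw [← pow_add]; exact hC4
    exact eq_inv_of_mul_eq_one_left h
  -- B commutes with C²
  have hcomm : Commute Bv (Cv ^ 2) := by
    have e1 : Cv ^ 2 * Bv = Bv * Cv⁻¹ ^ 2 := by
      calc Cv ^ 2 * Bv = Cv * (Cv * (Bv * Cv)) * Cv⁻¹ := by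
            rw [pow_two]; group
        _ = Cv * Bv⁻¹ * Cv⁻¹ := by rw [h5]
        _ = Bv * Cv⁻¹ * Cv⁻¹ := by rw [← h6]
        _ = Bv * Cv⁻¹ ^ 2 := by rw [pow_two]; group
    have e2 : Cv⁻¹ ^ 2 = Cv ^ 2 := by rw [inv_pow, ← hC2inv]
    have h : Cv ^ 2 * Bv = Bv * Cv ^ 2 := by rw [e1, e2]
    exact h.symm
  have hcomm' : Commute (Bv ^ (g + 1)) (Cv ^ 2) := hcomm.pow_left (g + 1)
  set x : PresentedGroup (amRels g) := Bv ^ (g + 1) * Cv ^ 2 with hx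
  have hx2 : x ^ 2 = 1 := by
    rw [hx, hcomm'.mul_pow, ← pow_mul, ← pow_mul,
      show (g + 1) * 2 = 2 * g + 2 by ring, hB2, one_mul,
      show 2 * 2 = 4 by norm_num, hC4]
  -- nontriviality via the map to DihedralGroup 4
  have hfrel : ∀ r ∈ amRels g, FreeGroup.lift amF r = 1 := by
    intro w hw
    simp only [amRels, Set.mem_insert_iff, Set.mem_singleton_iff] at hw
    rcases hw with h | h | h | h | h <;> subst h
    · rw [map_pow, FreeGroup.lift_apply_of]
      show (sr 1 : DihedralGroup 4) ^ 2 = 1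
      decide
    · rw [map_pow, FreeGroup.lift_apply_of]
      show (sr 0 : DihedralGroup 4) ^ (2 * g + 2) = 1
      rw [show 2 * g + 2 = 2 * (g + 1) by ring, pow_mul,
        show (sr 0 : DihedralGroup 4) ^ 2 = 1 by decide, one_pow]
    · rw [map_pow, FreeGroup.lift_apply_of]
      show (r 1 : DihedralGroup 4) ^ 4 = 1
      decide
    · rw [map_mul, map_mul, FreeGroup.lift_apply_of, FreeGroup.lift_apply_of, FreeGroup.lift_apply_of]
      show amF 0 * amF 1 * amF 2 = 1
      decide
    · rw [map_pow, map_mul, map_inv, FreeGroup.lift_apply_of, FreeGroup.lift_apply_of]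
      show ((amF 2)⁻¹ * amF 1) ^ 2 = 1
      decide
  have hx1 : x ≠ 1 := by
    set φ := PresentedGroup.toGroup hfrel with hφ
    intro hcontra
    have himg : φ x = 1 := by rw [hcontra, map_one]
    rw [hx, map_mul, map_pow, map_pow] at himg
    have hφB : φ Bv = sr 0 := PresentedGroup.toGroup.of hfrel
    have hφC : φ Cv = r 1 := PresentedGroup.toGroup.of hfrel
    rw [hφB, hφC] at himg
    rcases Nat.even_or_odd (g + 1) with ⟨k, hk⟩ | ⟨k, hk⟩
    · rw [hk, ← two_mul, pow_mul,
        show (sr 0 : DihedralGroup 4) ^ 2 = 1 by decide, one_pow, one_mul] at himg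
      revert himg; decide
    · rw [hk, pow_add, pow_mul,
        show (sr 0 : DihedralGroup 4) ^ 2 = 1 by decide, one_pow, one_mul, pow_one] at himg
      revert himg; decide
  exact orderOf_eq_prime hx2 hx1
end

section
/- Let g > 1 be an integer and let G be the group with presentation ⟨A, B, C | A² = B^{2g+2} = C⁴ = ABC = (C⁻¹B)² = 1⟩. Then the element B^{g+1}A of G has order 2 if g is odd, and order 4 if g is even. -/
open DihedralGroup in
/-- Representation of the generators in the dihedral group of order 8. -/
def amTarget : Fin 3 → DihedralGroup 4 := ![sr 0, sr 1, r 3]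

open DihedralGroup in
lemma amTarget_rels (g : ℕ) : ∀ r ∈ amRels g, FreeGroup.lift amTarget r = 1 := by
  intro w hw
  have h0 : (FreeGroup.lift amTarget) (FreeGroup.of (0 : Fin 3)) = sr 0 := by
    simp [amTarget]
  have h1 : (FreeGroup.lift amTarget) (FreeGroup.of (1 : Fin 3)) = sr 1 := by
    simp [amTarget]
  have h2 : (FreeGroup.lift amTarget) (FreeGroup.of (2 : Fin 3)) = r 3 := by
    simp [amTarget]
  rcases hw with rfl | rfl | rfl | rfl | rfl
  · rw [map_pow, h0]; decide
  · rw [map_pow, h1, pow_add, pow_mul]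
    have hs : (sr 1 : DihedralGroup 4) ^ 2 = 1 := by decide
    rw [hs, one_pow, one_mul]
  · rw [map_pow, h2]; decide
  · rw [map_mul, map_mul, h0, h1, h2]; decide
  · rw [map_pow, map_mul, map_inv, h2, h1]; decide

theorem stmt_8 (g : ℕ) (hg : 1 < g)
    (A B : PresentedGroup (amRels g))
    (hA : A = PresentedGroup.of 0) (hB : B = PresentedGroup.of 1) :
    (Odd g → orderOf (B ^ (g + 1) * A) = 2) ∧
    (Even g → orderOf (B ^ (g + 1) * A) = 4) := by
  subst hA hB
  set π : FreeGroup (Fin 3) →* PresentedGroup (amRels g) :=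
    QuotientGroup.mk' (Subgroup.normalClosure (amRels g)) with hπ
  have hone : ∀ w ∈ amRels g, π w = 1 := fun w hw =>
    (QuotientGroup.eq_one_iff w).mpr (Subgroup.subset_normalClosure hw)
  set a : PresentedGroup (amRels g) := PresentedGroup.of 0 with hadef
  set b : PresentedGroup (amRels g) := PresentedGroup.of 1 with hbdef
  set c : PresentedGroup (amRels g) := PresentedGroup.of 2 with hcdef
  have hpa : π (FreeGroup.of 0) = a := rfl
  have hpb : π (FreeGroup.of 1) = b := rfl
  have hpc : π (FreeGroup.of 2) = c := rfl
  -- the relations in the presented group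
  have ha : a ^ 2 = 1 := by
    have := hone _ (show FreeGroup.of 0 ^ 2 ∈ amRels g from Set.mem_insert _ _)
    rwa [map_pow, hpa] at this
  have hc : c ^ 4 = 1 := by
    have := hone _ (show FreeGroup.of 2 ^ 4 ∈ amRels g from
      Set.mem_insert_of_mem _ (Set.mem_insert_of_mem _ (Set.mem_insert _ _)))
    rwa [map_pow, hpc] at this
  have habc : a * b * c = 1 := by
    have := hone _ (show FreeGroup.of 0 * FreeGroup.of 1 * FreeGroup.of 2 ∈ amRels g from
      Set.mem_insert_of_mem _ (Set.mem_insert_of_mem _ (Set.mem_insert_of_mem _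
        (Set.mem_insert _ _))))
    rwa [map_mul, map_mul, hpa, hpb, hpc] at this
  have hcb : (c⁻¹ * b) ^ 2 = 1 := by
    have := hone _ (show ((FreeGroup.of 2)⁻¹ * FreeGroup.of 1) ^ 2 ∈ amRels g from
      Set.mem_insert_of_mem _ (Set.mem_insert_of_mem _ (Set.mem_insert_of_mem _
        (Set.mem_insert_of_mem _ rfl))))
    rwa [map_pow, map_mul, map_inv, hpc, hpb] at this
  -- derived relations
  have haa : a * a = 1 := by rw [← pow_two]; exact ha
  have hainv : a⁻¹ = a := by rw [inv_eq_iff_mul_eq_one]; exact haa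
  have hcinv : c⁻¹ = a * b := by
    rw [eq_inv_of_mul_eq_one_right habc, inv_inv]
  have hab4 : (a * b) ^ 4 = 1 := by
    rw [← hcinv, inv_pow, hc, inv_one]
  have hcb' : (a * b ^ 2) ^ 2 = 1 := by
    have h : c⁻¹ * b = a * b ^ 2 := by rw [hcinv, pow_two, mul_assoc]
    rwa [h] at hcb
  have hab2 : a * b ^ 2 * a⁻¹ = (b ^ 2)⁻¹ := by
    have h' : (a * b ^ 2 * a) * b ^ 2 = 1 := by
      rw [pow_two] at hcb'
      calc (a * b ^ 2 * a) * b ^ 2 = (a * b ^ 2) * (a * b ^ 2) := by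
            simp [mul_assoc]
      _ = 1 := hcb'
    rw [hainv]
    exact eq_inv_of_mul_eq_one_left h'
  have hconj : ∀ m : ℕ, a * b ^ (2 * m) * a⁻¹ = (b ^ (2 * m))⁻¹ := by
    intro m
    calc a * b ^ (2 * m) * a⁻¹ = a * (b ^ 2) ^ m * a⁻¹ := by rw [pow_mul]
    _ = (a * b ^ 2 * a⁻¹) ^ m := (conj_pow ..).symm
    _ = ((b ^ 2)⁻¹) ^ m := by rw [hab2]
    _ = ((b ^ 2) ^ m)⁻¹ := inv_pow _ _
    _ = (b ^ (2 * m))⁻¹ := by rw [pow_mul]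
  -- the homomorphism to the dihedral group of order 8
  set φ := (PresentedGroup.toGroup (amTarget_rels g)) with hφ
  have hφa : φ a = DihedralGroup.sr 0 := PresentedGroup.toGroup.of _
  have hφb : φ b = DihedralGroup.sr 1 := PresentedGroup.toGroup.of _
  have hφb2 : (DihedralGroup.sr 1 : DihedralGroup 4) ^ 2 = 1 := by decide
  set x : PresentedGroup (amRels g) := b ^ (g + 1) * a with hxdef
  constructor
  · -- odd case
    rintro ⟨m, rfl⟩
    have hE : 2 * m + 1 + 1 = 2 * (m + 1) := by ring
    have key : a * b ^ (2 * (m + 1)) = (b ^ (2 * (m + 1)))⁻¹ * a :=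
      mul_inv_eq_iff_eq_mul.mp (hconj (m + 1))
    have hx2 : x ^ 2 = 1 := by
      calc x ^ 2 = b ^ (2 * (m + 1)) * (a * b ^ (2 * (m + 1))) * a := by
            rw [hxdef, hE, pow_two]; simp [mul_assoc]
      _ = b ^ (2 * (m + 1)) * ((b ^ (2 * (m + 1)))⁻¹ * a) * a := by rw [key]
      _ = a * a := by simp [mul_assoc]
      _ = 1 := haa
    have hxne : x ≠ 1 := by
      intro h
      have h1 : φ x = 1 := by rw [h, map_one]
      rw [hxdef, map_mul, map_pow, hφa, hφb, hE, pow_mul, hφb2, one_pow, one_mul] at h1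
      exact absurd h1 (by decide)
    haveI : Fact (Nat.Prime 2) := ⟨Nat.prime_two⟩
    exact orderOf_eq_prime hx2 hxne
  · -- even case
    rintro ⟨m, hm⟩
    have hgm : g = 2 * m := by omega
    subst hgm
    have key : a * b ^ (2 * m) = (b ^ (2 * m))⁻¹ * a :=
      mul_inv_eq_iff_eq_mul.mp (hconj m)
    have hx2 : x ^ 2 = b * a * (b * a) := by
      calc x ^ 2 = b ^ (2 * m + 1) * (a * b ^ (2 * m)) * (b * a) := by
            rw [hxdef, pow_two]
            simp [pow_succ, mul_assoc]
      _ = b ^ (2 * m + 1) * ((b ^ (2 * m))⁻¹ * a) * (b * a) := by rw [key]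
      _ = b * a * (b * a) := by rw [pow_succ']; simp [mul_assoc]
    have hab3 : (a * b) ^ 3 = (a * b)⁻¹ := by
      rw [eq_inv_iff_mul_eq_one, ← pow_succ]; exact hab4
    have hx4 : x ^ 4 = 1 := by
      have e1 : x ^ 4 = (x ^ 2) ^ 2 := by rw [← pow_mul]
      rw [e1, hx2]
      calc (b * a * (b * a)) ^ 2 = b * (a * b) ^ 3 * a := by
            simp [pow_succ, pow_two, mul_assoc]
      _ = b * (a * b)⁻¹ * a := by rw [hab3]
      _ = 1 := by simp [mul_assoc]
    have hdvd4 : orderOf x ∣ 4 := orderOf_dvd_of_pow_eq_one hx4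
    have h4dvd : (4 : ℕ) ∣ orderOf x := by
      have hmap := orderOf_map_dvd φ x
      have hφx : φ x = DihedralGroup.r 3 := by
        rw [hxdef, map_mul, map_pow, hφa, hφb]
        have hs : (DihedralGroup.sr 1 : DihedralGroup 4) ^ (2 * m + 1) =
            DihedralGroup.sr 1 := by
          rw [pow_succ, pow_mul, hφb2, one_pow, one_mul]
        rw [hs]; decide
      rw [hφx] at hmap
      have hor : orderOf (DihedralGroup.r (3 : ZMod 4)) = 4 := by
        rw [DihedralGroup.orderOf_r]; decide
      rwa [hor] at hmap
    exact Nat.dvd_antisymm hdvd4 h4dvd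
end

section
/- Let g > 1 be an integer and let G be the group with presentation ⟨A, B, C | A² = B^{2g+2} = C⁴ = ABC = (C⁻¹B)² = 1⟩. Then in G the identity C⁻¹B^{g}C⁻¹ = B^{−g} holds if g is odd, and C⁻¹B^{g}C⁻¹ = B^{−g}C² holds if g is even. -/
lemma am_rel_one {g : ℕ} {r : FreeGroup (Fin 3)} (h : r ∈ amRels g) :
    PresentedGroup.mk (amRels g) r = 1 :=
  (QuotientGroup.eq_one_iff _).2 (Subgroup.subset_normalClosure h)

theorem stmt_9 (g : ℕ) (hg : 1 < g)
    (B C : PresentedGroup (amRels g))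
    (hB : B = PresentedGroup.of 1) (hC : C = PresentedGroup.of 2) :
    (Odd g → C⁻¹ * B ^ g * C⁻¹ = B ^ (-(g : ℤ))) ∧
    (Even g → C⁻¹ * B ^ g * C⁻¹ = B ^ (-(g : ℤ)) * C ^ 2) := by
  set A : PresentedGroup (amRels g) := PresentedGroup.of 0 with hA
  -- relator equations
  have hA2 : A * A = 1 := by
    have := am_rel_one (g := g) (r := FreeGroup.of 0 ^ 2) (by left; rfl)
    rw [sq] at this
    simpa [hA, PresentedGroup.of] using this
  have hC4 : C * C * (C * C) = 1 := by
    have := am_rel_one (g := g) (r := FreeGroup.of 2 ^ 4)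
      (by right; right; left; rfl)
    have h2 : (FreeGroup.of 2 : FreeGroup (Fin 3)) ^ 4 =
        FreeGroup.of 2 * FreeGroup.of 2 * (FreeGroup.of 2 * FreeGroup.of 2) := by
      rw [show (4:ℕ) = 2 + 2 from rfl, pow_add, sq]
    rw [h2] at this
    simpa [hC, PresentedGroup.of] using this
  have hABC : A * B * C = 1 := by
    have := am_rel_one (g := g)
      (r := FreeGroup.of 0 * FreeGroup.of 1 * FreeGroup.of 2)
      (by right; right; right; left; rfl)
    simpa [hA, hB, hC, PresentedGroup.of] using this
  have hCB : C⁻¹ * B * (C⁻¹ * B) = 1 := by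
    have := am_rel_one (g := g) (r := ((FreeGroup.of 2)⁻¹ * FreeGroup.of 1) ^ 2)
      (by right; right; right; right; rfl)
    rw [sq] at this
    simpa [hB, hC, PresentedGroup.of] using this
  -- derived relations
  have h1 : C⁻¹ * B * C⁻¹ = B⁻¹ := by
    calc C⁻¹ * B * C⁻¹ = (C⁻¹ * B * (C⁻¹ * B)) * B⁻¹ := by group
    _ = B⁻¹ := by rw [hCB]; group
  have hBCB : B * C * B = C⁻¹ := by
    have hAeq : A = (B * C)⁻¹ := by
      calc A = (A * B * C) * (B * C)⁻¹ := by group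
      _ = (B * C)⁻¹ := by rw [hABC]; group
    have hBC2 : (B * C) * (B * C) = 1 := by
      have h2 : (B * C)⁻¹ * (B * C)⁻¹ = 1 := by rw [← hAeq]; exact hA2
      have h3 : (B * C)⁻¹ = B * C := by
        calc (B * C)⁻¹ = ((B * C)⁻¹ * (B * C)⁻¹) * (B * C) := by group
        _ = B * C := by rw [h2]; group
      calc (B * C) * (B * C) = (B * C) * (B * C)⁻¹ := by rw [h3]
      _ = 1 := mul_inv_cancel _
    calc B * C * B = ((B * C) * (B * C)) * C⁻¹ := by group
    _ = C⁻¹ := by rw [hBC2]; group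
  have hCBinv : C * B = B⁻¹ * C⁻¹ := by
    calc C * B = B⁻¹ * (B * C * B) := by group
    _ = B⁻¹ * C⁻¹ := by rw [hBCB]
  have hBinvC : B⁻¹ * C = C⁻¹ * B := by
    calc B⁻¹ * C = (C⁻¹ * B * C⁻¹) * C := by rw [h1]
    _ = C⁻¹ * B := by group
  have hCCinv : C⁻¹ * C⁻¹ = C * C := by
    calc C⁻¹ * C⁻¹ = (C * C)⁻¹ * 1 := by group
    _ = (C * C)⁻¹ * (C * C * (C * C)) := by rw [hC4]
    _ = C * C := inv_mul_cancel_left _ _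
  have hcomm : Commute (C * C) B := by
    have key : B⁻¹ * (C * C) * B = C * C := by
      calc B⁻¹ * (C * C) * B = (B⁻¹ * C) * (C * B) := by group
      _ = (C⁻¹ * B) * (B⁻¹ * C⁻¹) := by rw [hBinvC, hCBinv]
      _ = C⁻¹ * C⁻¹ := by group
      _ = C * C := hCCinv
    have : C * C = B * (C * C) * B⁻¹ := by
      calc C * C = B * (B⁻¹ * (C * C) * B) * B⁻¹ := by group
      _ = B * (C * C) * B⁻¹ := by rw [key]
    calc (C * C) * B = (B * (C * C) * B⁻¹) * B := by rw [← this]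
    _ = B * (C * C) := by group
  have hCBC : C * B * C⁻¹ = (C * C) * B⁻¹ := by
    have hBC' : B * C⁻¹ = C * B⁻¹ := by
      calc B * C⁻¹ = C * (C⁻¹ * B * C⁻¹) := by group
      _ = C * B⁻¹ := by rw [h1]
    calc C * B * C⁻¹ = C * (B * C⁻¹) := by group
    _ = C * (C * B⁻¹) := by rw [hBC']
    _ = (C * C) * B⁻¹ := by group
  -- main induction
  have main : ∀ k : ℕ, C⁻¹ * B ^ k * C⁻¹ = B⁻¹ ^ k * (C * C) ^ (k + 1) := by
    intro k
    induction k with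
    | zero =>
      simp only [pow_zero, pow_one, one_mul, zero_add, mul_one]
      exact hCCinv
    | succ n ih =>
      have hc2 : Commute ((C * C) ^ (n + 2)) B⁻¹ := (hcomm.pow_left _).inv_right
      calc C⁻¹ * B ^ (n + 1) * C⁻¹
          = (C⁻¹ * B ^ n * C⁻¹) * (C * B * C⁻¹) := by rw [pow_succ]; group
      _ = B⁻¹ ^ n * (C * C) ^ (n + 1) * ((C * C) * B⁻¹) := by rw [ih, hCBC]
      _ = B⁻¹ ^ n * (((C * C) ^ (n + 1) * (C * C)) * B⁻¹) := by
          simp only [mul_assoc]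
      _ = B⁻¹ ^ n * ((C * C) ^ (n + 2) * B⁻¹) := by rw [← pow_succ]
      _ = B⁻¹ ^ n * (B⁻¹ * (C * C) ^ (n + 2)) := by rw [hc2.eq]
      _ = B⁻¹ ^ (n + 1) * (C * C) ^ (n + 1 + 1) := by
          rw [pow_succ B⁻¹]; simp only [mul_assoc]
  have hmg : C⁻¹ * B ^ g * C⁻¹ = B⁻¹ ^ g * (C * C) ^ (g + 1) := main g
  have hBz : B⁻¹ ^ g = B ^ (-(g : ℤ)) := by
    rw [inv_pow, ← zpow_natCast, ← zpow_neg]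
  have hCC4 : (C * C) ^ 2 = 1 := by rw [sq]; exact hC4
  constructor
  · rintro ⟨m, hm⟩
    have hg1 : g + 1 = 2 * (m + 1) := by omega
    have hone : (C * C) ^ (g + 1) = 1 := by
      rw [hg1, pow_mul, hCC4, one_pow]
    rw [hmg, hone, mul_one, hBz]
  · rintro ⟨m, hm⟩
    have hg1 : g + 1 = 2 * m + 1 := by omega
    have hone : (C * C) ^ (g + 1) = C * C := by
      rw [hg1, pow_succ, pow_mul, hCC4, one_pow, one_mul]
    rw [hmg, hone, hBz, sq]
end

section
/- Let n ≥ 3 be an integer, let λ = e^{2πi/n} ∈ ℂ, and consider the 3×3 complex matrices B = [[0,λ,0],[0,0,1],[1,0,0]] and C = [[0,0,1],[0,1,0],[λ⁻¹,0,0]], and set S₁ = Cⁿ B² C B². If n is odd, then the smallest positive integer k such that S₁^k is a scalar multiple of the 3×3 identity matrix equals n; if n is even, then the smallest such k equals 2. -/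
open Complex

private lemma diag3_pow (a b c : ℂ) (m : ℕ) :
    (!![a,0,0;0,b,0;0,0,c] : Matrix (Fin 3) (Fin 3) ℂ) ^ m
      = !![a^m,0,0;0,b^m,0;0,0,c^m] := by
  induction m with
  | zero => simp [Matrix.one_fin_three, Matrix.vecHead, Matrix.vecTail]
  | succ k ih =>
      rw [pow_succ, ih]
      ext i j
      fin_cases i <;> fin_cases j <;>
        simp [Matrix.mul_apply, Fin.sum_univ_three, pow_succ,
          Matrix.vecHead, Matrix.vecTail]

set_option maxHeartbeats 1000000 in
theorem stmt_18 (n : ℕ) (hn : 3 ≤ n) :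
    let lam : ℂ := Complex.exp (2 * Real.pi * Complex.I / n)
    let B : Matrix (Fin 3) (Fin 3) ℂ := !![0, lam, 0; 0, 0, 1; 1, 0, 0]
    let C : Matrix (Fin 3) (Fin 3) ℂ := !![0, 0, 1; 0, 1, 0; lam⁻¹, 0, 0]
    let S₁ : Matrix (Fin 3) (Fin 3) ℂ := C ^ n * B ^ 2 * C * B ^ 2
    (Odd n → IsLeast {k : ℕ | 0 < k ∧
      ∃ c : ℂ, S₁ ^ k = c • (1 : Matrix (Fin 3) (Fin 3) ℂ)} n) ∧
    (Even n → IsLeast {k : ℕ | 0 < k ∧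
      ∃ c : ℂ, S₁ ^ k = c • (1 : Matrix (Fin 3) (Fin 3) ℂ)} 2) := by
  intro lam B C S₁
  have hn0 : n ≠ 0 := by omega
  have hprim : IsPrimitiveRoot lam n := Complex.isPrimitiveRoot_exp n hn0
  have hlamn : lam ^ n = 1 := hprim.pow_eq_one
  have hlam0 : lam ≠ 0 := Complex.exp_ne_zero _
  have hinvn : lam⁻¹ ^ n = 1 := by rw [inv_pow, hlamn, inv_one]
  have hC2 : C ^ 2 = !![lam⁻¹,0,0;0,1,0;0,0,lam⁻¹] := by
    rw [pow_two]
    ext i j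
    fin_cases i <;> fin_cases j <;>
      simp [C, Matrix.mul_apply, Fin.sum_univ_three, Matrix.vecHead, Matrix.vecTail]
  have hB2 : B ^ 2 = !![0,0,lam;1,0,0;0,lam,0] := by
    rw [pow_two]
    ext i j
    fin_cases i <;> fin_cases j <;>
      simp [B, Matrix.mul_apply, Fin.sum_univ_three, Matrix.vecHead, Matrix.vecTail]
  constructor
  · -- odd case
    rintro ⟨m, hm⟩
    have hCn : C ^ n = !![lam⁻¹^m,0,0;0,1,0;0,0,lam⁻¹^m] * C := by
      rw [hm, pow_succ, pow_mul, hC2, diag3_pow, one_pow]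
    have hS : S₁ = !![lam * lam⁻¹^m,0,0;0,lam,0;0,0,lam⁻¹^m] := by
      show C ^ n * B ^ 2 * C * B ^ 2 = _
      rw [hCn, hB2]
      ext i j
      fin_cases i <;> fin_cases j <;>
        simp [C, Matrix.mul_apply, Fin.sum_univ_three, Matrix.vecHead, Matrix.vecTail] <;>
        (try field_simp) <;> (try ring)
    have hmun : (lam⁻¹ ^ m) ^ n = 1 := by
      rw [← pow_mul, mul_comm, pow_mul, hinvn, one_pow]
    constructor
    · refine ⟨by omega, 1, ?_⟩
      rw [hS, diag3_pow, mul_pow, hlamn, hmun, one_smul, one_mul]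
      exact Matrix.one_fin_three.symm
    · rintro k ⟨hk0, c, hc⟩
      rw [hS, diag3_pow] at hc
      have e00 := congrFun (congrFun hc 0) 0
      have e11 := congrFun (congrFun hc 1) 1
      have e22 := congrFun (congrFun hc 2) 2
      simp [Matrix.one_apply] at e00 e11 e22
      have h : lam ^ k * ((lam ^ m)⁻¹) ^ k = lam ^ k * 1 := by
        rw [mul_one, ← mul_pow, e00, e11]
      have h2 : ((lam ^ m)⁻¹) ^ k = 1 :=
        mul_left_cancel₀ (pow_ne_zero k hlam0) h
      have h3 : ((lam ^ m) ^ k)⁻¹ = 1 := by rw [← inv_pow]; exact h2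
      have hlk1 : lam ^ k = 1 := e11.trans (e22.symm.trans h3)
      exact Nat.le_of_dvd hk0 (hprim.dvd_of_pow_eq_one k hlk1)
  · -- even case
    rintro ⟨m, hm⟩
    have hCn : C ^ n = !![lam⁻¹^m,0,0;0,1,0;0,0,lam⁻¹^m] := by
      rw [show n = 2 * m from by omega, pow_mul, hC2, diag3_pow, one_pow]
    have hmm : lam⁻¹ ^ m * lam⁻¹ ^ m = 1 := by
      rw [← pow_add, show m + m = n from hm.symm, hinvn]
    have hS : S₁ = !![0,0,lam * lam⁻¹^m;0,lam,0;lam * lam⁻¹^m,0,0] := by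
      show C ^ n * B ^ 2 * C * B ^ 2 = _
      rw [hCn, hB2]
      ext i j
      fin_cases i <;> fin_cases j <;>
        simp [C, Matrix.mul_apply, Fin.sum_univ_three, Matrix.vecHead, Matrix.vecTail] <;>
        (try field_simp) <;> (try ring)
    have hmm' : (lam ^ m)⁻¹ * (lam ^ m)⁻¹ = 1 := by
      rw [inv_pow] at hmm; exact hmm
    have ha2 : lam * (lam ^ m)⁻¹ * (lam * (lam ^ m)⁻¹) = lam * lam := by
      calc lam * (lam ^ m)⁻¹ * (lam * (lam ^ m)⁻¹)
          = lam * lam * ((lam ^ m)⁻¹ * (lam ^ m)⁻¹) := by ring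
        _ = lam * lam := by rw [hmm', mul_one]
    have hS2 : S₁ ^ 2 = (lam * lam) • (1 : Matrix (Fin 3) (Fin 3) ℂ) := by
      rw [hS, pow_two]
      ext i j
      fin_cases i <;> fin_cases j <;>
        simp [Matrix.mul_apply, Fin.sum_univ_three, Matrix.one_apply, ha2,
          Matrix.vecHead, Matrix.vecTail]
    constructor
    · exact ⟨by omega, lam * lam, hS2⟩
    · rintro k ⟨hk0, c, hc⟩
      by_contra hlt
      have hk1 : k = 1 := by omega
      subst hk1
      rw [pow_one, hS] at hc
      have e02 := congrFun (congrFun hc 0) 2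
      simp [Matrix.one_apply, hlam0] at e02
end

section
/- Let n ≥ 3 be an integer, let λ = e^{2πi/n} ∈ ℂ, and consider the 3×3 complex matrices A = [[0,λ,0],[λ⁻¹,0,0],[0,0,1]] and C = [[0,0,1],[0,1,0],[λ⁻¹,0,0]], and set S₂ = Cⁿ A. If n is odd, then the smallest positive integer k such that S₂^k is a scalar multiple of the 3×3 identity matrix equals 3; if n is even, then the smallest such k equals 4. -/
/-!
Since `C² = diag(ζ⁻¹, 1, ζ⁻¹)`, the matrix `S₂ = Cⁿ A` is an explicit monomial matrix depending on
the parity of `n`. For `n = 2m + 1` it is a cyclic monomial matrix with entries `ζ⁻ᵐ, ζ⁻¹, ζ⁻ᵐ`,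
whose cube is `ζ⁻ⁿ = 1`. For `n = 2m` its square is `diag(ζ⁻ᵐ, ζ⁻ᵐ, 1)`, where `ζ⁻ᵐ ≠ 1` by
primitivity and `ζ⁻²ᵐ = 1`, so its fourth power is `1`. The smaller powers are not scalar because
they have a nonzero off-diagonal entry or two distinct diagonal entries.
-/

namespace Matrix

variable {ι R : Type*} [DecidableEq ι] [Semiring R]

lemma not_exists_eq_smul_one_of_apply_ne_zero {M : Matrix ι ι R} {i j : ι} (hij : i ≠ j)
    (hM : M i j ≠ 0) : ¬ ∃ c : R, M = c • 1 := by
  rintro ⟨c, rfl⟩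
  simp [one_apply_ne hij] at hM

lemma not_exists_eq_smul_one_of_apply_ne_apply {M : Matrix ι ι R} {i j : ι}
    (hM : M i i ≠ M j j) : ¬ ∃ c : R, M = c • 1 := by
  rintro ⟨c, rfl⟩
  simp at hM

end Matrix

open Matrix

section FermatAutomorphisms

variable {K : Type*} [Field K]

def fermatAutA (ζ : K) : Matrix (Fin 3) (Fin 3) K := !![0, ζ, 0; ζ⁻¹, 0, 0; 0, 0, 1]

def fermatAutC (ζ : K) : Matrix (Fin 3) (Fin 3) K := !![0, 0, 1; 0, 1, 0; ζ⁻¹, 0, 0]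

def fermatMirror (ζ : K) (n : ℕ) : Matrix (Fin 3) (Fin 3) K := fermatAutC ζ ^ n * fermatAutA ζ

lemma fermatAutC_pow_two_mul (ζ : K) (m : ℕ) :
    fermatAutC ζ ^ (2 * m) = !![(ζ ^ m)⁻¹, 0, 0; 0, 1, 0; 0, 0, (ζ ^ m)⁻¹] := by
  have hsq : fermatAutC ζ ^ 2 = diagonal ![ζ⁻¹, 1, ζ⁻¹] := by
    ext i j; fin_cases i <;> fin_cases j <;> simp [fermatAutC, sq]
  rw [pow_mul, hsq, diagonal_pow]
  ext i j; fin_cases i <;> fin_cases j <;> simp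

lemma fermatMirror_two_mul_add_one (ζ : K) (m : ℕ) (hζ : ζ ≠ 0) :
    fermatMirror ζ (2 * m + 1) = !![0, 0, (ζ ^ m)⁻¹; ζ⁻¹, 0, 0; 0, (ζ ^ m)⁻¹, 0] := by
  rw [fermatMirror, pow_succ, fermatAutC_pow_two_mul, fermatAutC, fermatAutA]
  simp [hζ]

lemma fermatMirror_two_mul (ζ : K) (m : ℕ) :
    fermatMirror ζ (2 * m) = !![0, ζ * (ζ ^ m)⁻¹, 0; ζ⁻¹, 0, 0; 0, 0, (ζ ^ m)⁻¹] := by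
  rw [fermatMirror, fermatAutC_pow_two_mul, fermatAutA]
  simp [mul_comm]

lemma isLeast_fermatMirror_odd {ζ : K} {m : ℕ} (hζ : ζ ^ (2 * m + 1) = 1) :
    IsLeast {k : ℕ | 0 < k ∧ ∃ c : K, fermatMirror ζ (2 * m + 1) ^ k = c • 1} 3 := by
  have hζ0 : ζ ≠ 0 := by rintro rfl; simp at hζ
  have hcube : (ζ ^ m)⁻¹ * (ζ ^ m)⁻¹ * ζ⁻¹ = 1 := by
    rw [← mul_inv, ← mul_inv, ← pow_add, ← pow_succ, ← two_mul, hζ, inv_one]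
  rw [fermatMirror_two_mul_add_one ζ m hζ0]
  refine ⟨⟨by norm_num, 1, ?_⟩, fun k ⟨hk, hscalar⟩ => ?_⟩
  · ext i j; fin_cases i <;> fin_cases j <;> simp [pow_succ] <;> linear_combination hcube
  · by_contra! hlt
    interval_cases k
    · rw [pow_one] at hscalar
      exact not_exists_eq_smul_one_of_apply_ne_zero (i := 1) (j := 0) (by decide)
        (by simpa using hζ0) hscalar
    · exact not_exists_eq_smul_one_of_apply_ne_zero (i := 0) (j := 1) (by decide)
        (by simp [sq, hζ0]) hscalar

lemma isLeast_fermatMirror_even {ζ : K} {m : ℕ} (hζ : ζ ^ (2 * m) = 1) (hζm : ζ ^ m ≠ 1) :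
    IsLeast {k : ℕ | 0 < k ∧ ∃ c : K, fermatMirror ζ (2 * m) ^ k = c • 1} 4 := by
  have hζ0 : ζ ≠ 0 := by rintro rfl; cases m <;> simp_all
  have hsq : fermatMirror ζ (2 * m) ^ 2 = !![(ζ ^ m)⁻¹, 0, 0; 0, (ζ ^ m)⁻¹, 0; 0, 0, 1] := by
    rw [fermatMirror_two_mul, sq]
    ext i j; fin_cases i <;> fin_cases j <;> simp [hζ0, ← mul_inv, ← pow_add, ← two_mul, hζ]
    field_simp
  refine ⟨⟨by norm_num, 1, ?_⟩, fun k ⟨hk, hscalar⟩ => ?_⟩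
  · rw [show 4 = 2 * 2 from rfl, pow_mul, hsq]
    ext i j; fin_cases i <;> fin_cases j <;> simp [sq, ← mul_inv, ← pow_add, ← two_mul, hζ]
  · by_contra! hlt
    interval_cases k
    · rw [pow_one, fermatMirror_two_mul] at hscalar
      exact not_exists_eq_smul_one_of_apply_ne_zero (i := 1) (j := 0) (by decide)
        (by simpa using hζ0) hscalar
    · rw [hsq] at hscalar
      exact not_exists_eq_smul_one_of_apply_ne_apply (i := 0) (j := 2)
        (by simpa using hζm) hscalar
    · rw [pow_succ, hsq, fermatMirror_two_mul] at hscalar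
      exact not_exists_eq_smul_one_of_apply_ne_zero (i := 1) (j := 0) (by decide)
        (by simp [hζ0]) hscalar

end FermatAutomorphisms

theorem stmt_19 (n : ℕ) (hn : 3 ≤ n) :
    let lam : ℂ := Complex.exp (2 * Real.pi * Complex.I / n)
    let A : Matrix (Fin 3) (Fin 3) ℂ := !![0, lam, 0; lam⁻¹, 0, 0; 0, 0, 1]
    let C : Matrix (Fin 3) (Fin 3) ℂ := !![0, 0, 1; 0, 1, 0; lam⁻¹, 0, 0]
    let S₂ : Matrix (Fin 3) (Fin 3) ℂ := C ^ n * A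
    (Odd n → IsLeast {k : ℕ | 0 < k ∧
      ∃ c : ℂ, S₂ ^ k = c • (1 : Matrix (Fin 3) (Fin 3) ℂ)} 3) ∧
    (Even n → IsLeast {k : ℕ | 0 < k ∧
      ∃ c : ℂ, S₂ ^ k = c • (1 : Matrix (Fin 3) (Fin 3) ℂ)} 4) := by
  intro lam A C S₂
  have hlam : IsPrimitiveRoot lam n := Complex.isPrimitiveRoot_exp n (by omega)
  change (Odd n → IsLeast {k | 0 < k ∧ ∃ c : ℂ, fermatMirror lam n ^ k = c • 1} 3) ∧
    (Even n → IsLeast {k | 0 < k ∧ ∃ c : ℂ, fermatMirror lam n ^ k = c • 1} 4)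
  refine ⟨fun ⟨m, hm⟩ => ?_, fun ⟨m, hm⟩ => ?_⟩
  · subst hm
    exact isLeast_fermatMirror_odd hlam.pow_eq_one
  · rw [← two_mul] at hm
    subst hm
    exact isLeast_fermatMirror_even hlam.pow_eq_one
      (hlam.pow_ne_one_of_pos_of_lt (by omega) (by omega))
end
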